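/- Let E be a finite-dimensional complex vector space, Θ a nondegenerate symmetric bilinear form on E, and N : E → E a Θ-symmetric nilpotent linear map with N^m = 0 and N^{m-1} ≠ 0, where m is minimal with E = Ker N^m. Then there exists u ∈ E such that Θ(N^{m-1} u, u) ≠ 0. -/
import Mathlib


/-- For a Θ-symmetric nilpotent map N with N^m = 0 and N^(m-1) ≠ 0 (Θ a
nondegenerate symmetric bilinear form), there exists u with Θ(N^(m-1) u, u) ≠ 0. -/
theorem exists_vector_pairing_nonzero
    (E : Type*) [AddCommGroup E] [Module ℂ E] [FiniteDimensional ℂ E]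
    (Θ : E →ₗ[ℂ] E →ₗ[ℂ] ℂ)
    (hsymm : ∀ u v : E, Θ u v = Θ v u)
    (hnd : ∀ u : E, (∀ v : E, Θ u v = 0) → u = 0)
    (N : E →ₗ[ℂ] E)
    (hNsymm : ∀ u v : E, Θ (N u) v = Θ u (N v))
    (m : ℕ) (hm : 1 ≤ m)
    (hNm : N ^ m = 0)
    (hNm1 : N ^ (m - 1) ≠ 0) :
    ∃ u : E, Θ ((N ^ (m - 1)) u) u ≠ 0 := by
  -- N^k is Θ-symmetric
  have hpow : ∀ (k : ℕ) (u v : E), Θ ((N ^ k) u) v = Θ u ((N ^ k) v) := by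
    intro k
    induction k with
    | zero => intro u v; simp
    | succ k ih =>
      intro u v
      have h1 : (N ^ (k + 1)) u = (N ^ k) (N u) := by
        rw [pow_succ, Module.End.mul_apply]
      have h2 : (N ^ (k + 1)) v = N ((N ^ k) v) := by
        rw [pow_succ', Module.End.mul_apply]
      rw [h1, ih (N u) v, hNsymm, h2]
  set M := N ^ (m - 1) with hM
  -- symmetry of B(u,v) = Θ (M u) v
  have hBsymm : ∀ u v : E, Θ (M u) v = Θ (M v) u := by
    intro u v
    rw [hpow (m - 1) u v, hsymm]
  by_contra h
  push_neg at h
  -- get v with M v ≠ 0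
  obtain ⟨v, hv⟩ : ∃ v : E, M v ≠ 0 := by
    by_contra hc
    push_neg at hc
    exact hNm1 (LinearMap.ext fun x => hc x)
  -- nondegeneracy gives w
  obtain ⟨w, hw⟩ : ∃ w : E, Θ (M v) w ≠ 0 := by
    by_contra hc
    push_neg at hc
    exact hv (hnd (M v) hc)
  -- polarization
  have hvv := h v
  have hww := h w
  have hvw := h (v + w)
  have expand : Θ (M (v + w)) (v + w)
      = Θ (M v) v + Θ (M v) w + Θ (M w) v + Θ (M w) w := by
    simp [map_add]
    ring
  rw [hvv, hww, hBsymm w v] at expand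
  rw [hvw] at expand
  apply hw
  have : (2 : ℂ) * Θ (M v) w = 0 := by linear_combination -expand
  have h2 : (2 : ℂ) ≠ 0 := two_ne_zero
  exact (mul_eq_zero.mp this).resolve_left h2
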